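/- If ‖φ(y)‖ ≤ R and Δ(y) ∈ [0,1] for all y in a finite set Y, then the gradient of the expected loss J(w) = Σ_y Δ(y) p_w(y) under the Gibbs distribution is Lipschitz continuous: there exists L ≥ 0 (one may take L = 8R²|Y|, or any valid constant) such that ‖∇J(w) − ∇J(w')‖ ≤ L‖w − w'‖ for all w, w'. -/

import Mathlib

/-! The Gibbs weights are `p_w(y) = exp (⟪w, φ y⟫ - A w)` with log-partition function `A`, whose
derivative is the Gibbs mean `m w = ∑ y, p_w(y) • φ y`. Hence `∇ p_w(y) = p_w(y) • (φ y - m w)` has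
norm at most `2R`, so every weight is `2R`-Lipschitz, and
`∇J w = ∑ y, ((Δ y - J w) * p_w(y)) • φ y`. The coefficients `(Δ y - J w) * p_w(y)` are products
of functions bounded by `1` and Lipschitz with constants `2R` and `2R|Y|`; summing against
`‖φ y‖ ≤ R` gives the Lipschitz constant `4R²|Y|` for `∇J`. -/

open Finset
open scoped RealInnerProductSpace

section Gibbs

variable {F : Type*} [NormedAddCommGroup F] [InnerProductSpace ℝ F] {Y : Type*} [Fintype Y]

noncomputable def gibbs (φ : Y → F) (w : F) (y : Y) : ℝ :=
  Real.exp ⟪w, φ y⟫ / ∑ y', Real.exp ⟪w, φ y'⟫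

noncomputable def gibbsMean (φ : Y → F) (w : F) : F :=
  ∑ y, gibbs φ w y • φ y

noncomputable def logPartition (φ : Y → F) (w : F) : ℝ :=
  Real.log (∑ y, Real.exp ⟪w, φ y⟫)

lemma hasFDerivAt_inner_left_const (v w : F) :
    HasFDerivAt (fun w : F => ⟪w, v⟫) (innerSL ℝ v) w := by
  rw [show (fun w : F => ⟪w, v⟫) = innerSL ℝ v from funext fun w => real_inner_comm v w]
  exact (innerSL ℝ v).hasFDerivAt

variable (φ : Y → F) (w : F)

lemma gibbs_nonneg (y : Y) : 0 ≤ gibbs φ w y := by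
  unfold gibbs; positivity

variable [Nonempty Y]

lemma sum_exp_inner_pos : 0 < ∑ y, Real.exp ⟪w, φ y⟫ :=
  sum_pos (fun _ _ => Real.exp_pos _) univ_nonempty

lemma sum_gibbs : ∑ y, gibbs φ w y = 1 := by
  simp only [gibbs, ← sum_div]
  exact div_self (sum_exp_inner_pos φ w).ne'

lemma gibbs_le_one (y : Y) : gibbs φ w y ≤ 1 :=
  sum_gibbs φ w ▸ single_le_sum (fun y _ => gibbs_nonneg φ w y) (mem_univ y)

lemma norm_gibbsMean_le {R : ℝ} (hR : ∀ y, ‖φ y‖ ≤ R) : ‖gibbsMean φ w‖ ≤ R :=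
  calc ‖gibbsMean φ w‖ ≤ ∑ y, gibbs φ w y * ‖φ y‖ := by
        refine (norm_sum_le _ _).trans_eq (sum_congr rfl fun y _ => ?_)
        rw [norm_smul, Real.norm_of_nonneg (gibbs_nonneg φ w y)]
    _ ≤ ∑ y, gibbs φ w y * R :=
        sum_le_sum fun y _ => mul_le_mul_of_nonneg_left (hR y) (gibbs_nonneg φ w y)
    _ = R := by rw [← sum_mul, sum_gibbs, one_mul]

lemma gibbs_eq_exp_sub_logPartition (y : Y) :
    gibbs φ w y = Real.exp (⟪w, φ y⟫ - logPartition φ w) := by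
  rw [Real.exp_sub, logPartition, Real.exp_log (sum_exp_inner_pos φ w), gibbs]

lemma hasFDerivAt_logPartition :
    HasFDerivAt (logPartition φ) (innerSL ℝ (gibbsMean φ w)) w := by
  have hZ := HasFDerivAt.fun_sum (u := univ) fun y _ =>
    (hasFDerivAt_inner_left_const (φ y) w).exp
  refine (hZ.log (sum_exp_inner_pos φ w).ne').congr_fderiv ?_
  ext x
  simp [gibbsMean, gibbs, div_eq_inv_mul, mul_sum, mul_assoc]

lemma hasFDerivAt_gibbs (y : Y) :
    HasFDerivAt (gibbs φ · y) (gibbs φ w y • innerSL ℝ (φ y - gibbsMean φ w)) w := by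
  have hexp : (gibbs φ · y) = fun w => Real.exp (⟪w, φ y⟫ - logPartition φ w) :=
    funext fun w => gibbs_eq_exp_sub_logPartition φ w y
  rw [hexp, gibbs_eq_exp_sub_logPartition, map_sub]
  exact ((hasFDerivAt_inner_left_const (φ y) w).fun_sub (hasFDerivAt_logPartition φ w)).exp

variable {φ} in
lemma abs_gibbs_sub_le {R : ℝ} (hR : ∀ y, ‖φ y‖ ≤ R) (y : Y) (w w' : F) :
    |gibbs φ w y - gibbs φ w' y| ≤ 2 * R * ‖w - w'‖ := by
  have hbound (u : F) : ‖gibbs φ u y • innerSL ℝ (φ y - gibbsMean φ u)‖ ≤ 2 * R :=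
    calc ‖gibbs φ u y • innerSL ℝ (φ y - gibbsMean φ u)‖
        = gibbs φ u y * ‖φ y - gibbsMean φ u‖ := by
          rw [norm_smul, innerSL_apply_norm, Real.norm_of_nonneg (gibbs_nonneg φ u y)]
      _ ≤ 1 * (R + R) := mul_le_mul (gibbs_le_one φ u y)
          ((norm_sub_le _ _).trans (add_le_add (hR y) (norm_gibbsMean_le φ u hR)))
          (norm_nonneg _) zero_le_one
      _ = 2 * R := by ring
  exact convex_univ.norm_image_sub_le_of_norm_hasFDerivWithin_le
    (fun u _ => (hasFDerivAt_gibbs φ u y).hasFDerivWithinAt) (fun u _ => hbound u)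
    (Set.mem_univ w') (Set.mem_univ w)

end Gibbs

section ExpectedLoss

variable {F : Type*} [NormedAddCommGroup F] [InnerProductSpace ℝ F] {Y : Type*} [Fintype Y]
  (φ : Y → F) (Δ : Y → ℝ)

noncomputable def expectedLoss (w : F) : ℝ :=
  ∑ y, Δ y * gibbs φ w y

variable [Nonempty Y] {φ Δ}

lemma abs_sub_expectedLoss_le (hΔ : ∀ y, Δ y ∈ Set.Icc (0 : ℝ) 1) (w : F) (y : Y) :
    |Δ y - expectedLoss φ Δ w| ≤ 1 := by
  have h0 : 0 ≤ expectedLoss φ Δ w :=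
    sum_nonneg fun y _ => mul_nonneg (hΔ y).1 (gibbs_nonneg φ w y)
  have h1 : expectedLoss φ Δ w ≤ 1 :=
    calc expectedLoss φ Δ w ≤ ∑ y, gibbs φ w y :=
          sum_le_sum fun y _ => mul_le_of_le_one_left (gibbs_nonneg φ w y) (hΔ y).2
      _ = 1 := sum_gibbs φ w
  rw [abs_le]
  constructor <;> linarith [(hΔ y).1, (hΔ y).2]

lemma abs_expectedLoss_sub_le {R : ℝ} (hR : ∀ y, ‖φ y‖ ≤ R)
    (hΔ : ∀ y, Δ y ∈ Set.Icc (0 : ℝ) 1) (w w' : F) :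
    |expectedLoss φ Δ w - expectedLoss φ Δ w'| ≤ 2 * R * Fintype.card Y * ‖w - w'‖ :=
  calc |expectedLoss φ Δ w - expectedLoss φ Δ w'|
      = |∑ y, Δ y * (gibbs φ w y - gibbs φ w' y)| := by
        simp only [expectedLoss, mul_sub, sum_sub_distrib]
    _ ≤ ∑ y, |Δ y * (gibbs φ w y - gibbs φ w' y)| := abs_sum_le_sum_abs _ _
    _ ≤ ∑ _y : Y, 2 * R * ‖w - w'‖ := sum_le_sum fun y _ => by
        rw [abs_mul, abs_of_nonneg (hΔ y).1]
        exact (mul_le_of_le_one_left (abs_nonneg _) (hΔ y).2).trans (abs_gibbs_sub_le hR y w w')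
    _ = 2 * R * Fintype.card Y * ‖w - w'‖ := by
        rw [sum_const, card_univ, nsmul_eq_mul]; ring

variable (φ Δ) in
lemma hasGradientAt_expectedLoss [CompleteSpace F] (w : F) :
    HasGradientAt (expectedLoss φ Δ)
      (∑ y, ((Δ y - expectedLoss φ Δ w) * gibbs φ w y) • φ y) w := by
  rw [hasGradientAt_iff_hasFDerivAt]
  refine (HasFDerivAt.fun_sum (u := univ) fun y _ =>
    (hasFDerivAt_gibbs φ w y).const_mul (Δ y)).congr_fderiv ?_
  ext x
  simp only [gibbsMean, expectedLoss, map_sub, map_sum, map_smul, _root_.sum_apply, smul_apply,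
    sub_apply, coe_innerSL_apply, InnerProductSpace.toDual_apply_apply, smul_eq_mul, mul_sub,
    sub_mul, mul_sum, sum_mul, sum_sub_distrib, mul_assoc, mul_left_comm, sub_right_inj]
  rw [Finset.sum_comm]
  exact sum_congr rfl fun _ _ => sum_congr rfl fun _ _ => by ring

lemma norm_gradient_expectedLoss_sub_le [CompleteSpace F] {R : ℝ} (hR : ∀ y, ‖φ y‖ ≤ R)
    (hΔ : ∀ y, Δ y ∈ Set.Icc (0 : ℝ) 1) (w w' : F) :
    ‖gradient (expectedLoss φ Δ) w - gradient (expectedLoss φ Δ) w'‖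
      ≤ 4 * R ^ 2 * Fintype.card Y * ‖w - w'‖ := by
  set n : ℝ := (Fintype.card Y : ℝ)
  set δ := ‖w - w'‖
  set c : F → Y → ℝ := fun u y => (Δ y - expectedLoss φ Δ u) * gibbs φ u y
  have hR0 : 0 ≤ R := (norm_nonneg _).trans (hR (Classical.arbitrary Y))
  have hc (y : Y) : |c w y - c w' y| ≤ 2 * R * δ + 2 * R * n * δ * gibbs φ w' y :=
    calc |c w y - c w' y|
        = |(Δ y - expectedLoss φ Δ w) * (gibbs φ w y - gibbs φ w' y)
            + (expectedLoss φ Δ w' - expectedLoss φ Δ w) * gibbs φ w' y| := by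
          simp only [c]; congr 1; ring
      _ ≤ 1 * (2 * R * δ) + 2 * R * n * δ * gibbs φ w' y := by
          refine (abs_add_le _ _).trans (add_le_add ?_ ?_)
          · rw [abs_mul]
            exact mul_le_mul (abs_sub_expectedLoss_le hΔ w y) (abs_gibbs_sub_le hR y w w')
              (abs_nonneg _) zero_le_one
          · rw [abs_mul, abs_of_nonneg (gibbs_nonneg φ w' y), abs_sub_comm]
            exact mul_le_mul_of_nonneg_right (abs_expectedLoss_sub_le hR hΔ w w')
              (gibbs_nonneg φ w' y)
      _ = 2 * R * δ + 2 * R * n * δ * gibbs φ w' y := by ring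
  rw [(hasGradientAt_expectedLoss φ Δ w).gradient, (hasGradientAt_expectedLoss φ Δ w').gradient,
    ← sum_sub_distrib]
  calc ‖∑ y, (c w y • φ y - c w' y • φ y)‖ ≤ ∑ y, |c w y - c w' y| * R := by
        refine (norm_sum_le _ _).trans (sum_le_sum fun y _ => ?_)
        rw [← sub_smul, norm_smul, Real.norm_eq_abs]
        exact mul_le_mul_of_nonneg_left (hR y) (abs_nonneg _)
    _ ≤ (∑ y, (2 * R * δ + 2 * R * n * δ * gibbs φ w' y)) * R := by
        rw [← sum_mul]
        exact mul_le_mul_of_nonneg_right (sum_le_sum fun y _ => hc y) hR0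
    _ = 4 * R ^ 2 * n * δ := by
        rw [sum_add_distrib, sum_const, ← mul_sum, sum_gibbs, card_univ, nsmul_eq_mul]
        ring

end ExpectedLoss

theorem gradient_expected_loss_lipschitz
    {d : ℕ} {Y : Type*} [Fintype Y] [Nonempty Y]
    (φ : Y → EuclideanSpace ℝ (Fin d)) (Δ : Y → ℝ) (R : ℝ)
    (hR : ∀ y, ‖φ y‖ ≤ R)
    (hΔ : ∀ y, Δ y ∈ Set.Icc (0 : ℝ) 1)
    (p : EuclideanSpace ℝ (Fin d) → Y → ℝ)
    (hp : ∀ w y, p w y = Real.exp ⟪w, φ y⟫ / ∑ y', Real.exp ⟪w, φ y'⟫)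
    (J : EuclideanSpace ℝ (Fin d) → ℝ)
    (hJ : ∀ w, J w = ∑ y, Δ y * p w y) :
    ∃ L : ℝ, 0 ≤ L ∧
      ∀ w w' : EuclideanSpace ℝ (Fin d),
        ‖gradient J w - gradient J w'‖ ≤ L * ‖w - w'‖ := by
  have hJ_eq : J = expectedLoss φ Δ := funext fun w => by
    simp only [hJ, hp, expectedLoss, gibbs]
  subst hJ_eq
  exact ⟨4 * R ^ 2 * Fintype.card Y, by positivity, norm_gradient_expectedLoss_sub_le hR hΔ⟩
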